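/- arXiv:2409.15818 — 7 statements merged into one kernel-verified Lean document; each statement's English description precedes it below -/
import Mathlib

section
/- Let A ∈ ℝ^{m×n}, ε ∈ (0,1), and let S ∈ ℝ^{s×m} be a (1±ε) ℓ₂-subspace embedding for the column space of A. Suppose SA = QR where Q ∈ ℝ^{s×n} satisfies QᵀQ = Iₙ and R ∈ ℝ^{n×n} is invertible. Then for every x ∈ ℝⁿ: (1/(1+ε))·‖x‖₂² ≤ ‖A R⁻¹ x‖₂² ≤ (1/(1−ε))·‖x‖₂². -/
open Matrix

/-- The Euclidean (ℓ₂) norm of a real vector. -/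
noncomputable def e2norm {k : ℕ} (v : Fin k → ℝ) : ℝ := Real.sqrt (∑ i, (v i) ^ 2)

lemma e2norm_sq {k : ℕ} (v : Fin k → ℝ) : e2norm v ^ 2 = ∑ i, (v i) ^ 2 := by
  rw [e2norm, Real.sq_sqrt]
  positivity

lemma e2norm_mulVec_sq_of_orth {s n : ℕ} (Q : Matrix (Fin s) (Fin n) ℝ)
    (hQ : Qᵀ * Q = 1) (x : Fin n → ℝ) : e2norm (Q.mulVec x) ^ 2 = e2norm x ^ 2 := by
  rw [e2norm_sq, e2norm_sq]
  have h1 : ∑ i, (Q.mulVec x i) ^ 2 = Q.mulVec x ⬝ᵥ Q.mulVec x := by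
    simp [dotProduct, sq]
  have h2 : x ⬝ᵥ (Qᵀ * Q).mulVec x = Q.mulVec x ⬝ᵥ Q.mulVec x := by
    rw [← mulVec_mulVec, dotProduct_mulVec, vecMul_transpose]
  rw [h1, ← h2, hQ, one_mulVec]
  simp [dotProduct, sq]

/-- With `S` a `(1 ± ε)` ℓ₂-subspace embedding for the column space of `A` and
`S * A = Q * R` with `Qᵀ * Q = 1` and `R` invertible, the preconditioned matrix
`A * R⁻¹` satisfies `(1/(1+ε))‖x‖² ≤ ‖A R⁻¹ x‖² ≤ (1/(1−ε))‖x‖²` for all `x`. -/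
theorem preconditioned_norm_bounds {m n s : ℕ}
    (A : Matrix (Fin m) (Fin n) ℝ) (S : Matrix (Fin s) (Fin m) ℝ)
    (Q : Matrix (Fin s) (Fin n) ℝ) (R : Matrix (Fin n) (Fin n) ℝ)
    (ε : ℝ) (hε0 : 0 < ε) (hε1 : ε < 1)
    (hemb : ∀ x : Fin n → ℝ,
      (1 - ε) * e2norm (A.mulVec x) ^ 2 ≤ e2norm ((S * A).mulVec x) ^ 2 ∧
      e2norm ((S * A).mulVec x) ^ 2 ≤ (1 + ε) * e2norm (A.mulVec x) ^ 2)
    (hQR : S * A = Q * R)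
    (hQ : Qᵀ * Q = 1)
    (hR : IsUnit R) :
    ∀ x : Fin n → ℝ,
      (1 / (1 + ε)) * e2norm x ^ 2 ≤ e2norm ((A * R⁻¹).mulVec x) ^ 2 ∧
      e2norm ((A * R⁻¹).mulVec x) ^ 2 ≤ (1 / (1 - ε)) * e2norm x ^ 2 := by
  intro x
  set y := R⁻¹.mulVec x with hy
  have hAy : (A * R⁻¹).mulVec x = A.mulVec y := by rw [← mulVec_mulVec]
  have hSAy : (S * A).mulVec y = Q.mulVec x := by
    rw [hQR, hy, mulVec_mulVec, Matrix.mul_assoc, Matrix.mul_nonsing_inv R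
      ((Matrix.isUnit_iff_isUnit_det R).mp hR), Matrix.mul_one]
  have hQx : e2norm ((S * A).mulVec y) ^ 2 = e2norm x ^ 2 := by
    rw [hSAy, e2norm_mulVec_sq_of_orth Q hQ]
  obtain ⟨h1, h2⟩ := hemb y
  rw [hQx] at h1 h2
  rw [hAy]
  constructor
  · rw [div_mul_eq_mul_div, div_le_iff₀ (by linarith), one_mul, mul_comm]
    exact h2
  · rw [div_mul_eq_mul_div, le_div_iff₀ (by linarith), one_mul, mul_comm]
    exact h1
end

section
/- Let A ∈ ℝ^{m×n}, ε ∈ (0,1), and let S ∈ ℝ^{s×m} be a (1±ε) ℓ₂-subspace embedding for the column space of A. Suppose SA = QR where Q ∈ ℝ^{s×n} satisfies QᵀQ = Iₙ and R ∈ ℝ^{n×n} is invertible. Then the condition number of the preconditioned matrix A R⁻¹ is at most √((1+ε)/(1−ε)); that is, for all nonzero x, y ∈ ℝⁿ: ‖A R⁻¹ x‖₂ / ‖x‖₂ ≤ √((1+ε)/(1−ε)) · (‖A R⁻¹ y‖₂ / ‖y‖₂). -/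
open Matrix

lemma e2norm_nonneg {k : ℕ} (v : Fin k → ℝ) : 0 ≤ e2norm v := Real.sqrt_nonneg _

lemma e2norm_pos {k : ℕ} {v : Fin k → ℝ} (hv : v ≠ 0) : 0 < e2norm v := by
  obtain ⟨i, hi⟩ := Function.ne_iff.mp hv
  exact Real.sqrt_pos.mpr (Finset.sum_pos' (fun j _ => sq_nonneg _)
    ⟨i, Finset.mem_univ i, by have := sq_abs (v i); nlinarith [abs_pos.mpr hi, abs_nonneg (v i)]⟩)

lemma e2norm_mulVec_orth {s n : ℕ} {Q : Matrix (Fin s) (Fin n) ℝ}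
    (hQ : Qᵀ * Q = 1) (v : Fin n → ℝ) : e2norm (Q.mulVec v) = e2norm v := by
  unfold e2norm
  congr 1
  have h1 : ∑ i, (Q.mulVec v i) ^ 2 = Q.mulVec v ⬝ᵥ Q.mulVec v := by
    simp [dotProduct, sq]
  have h2 : ∑ i, (v i) ^ 2 = v ⬝ᵥ v := by simp [dotProduct, sq]
  have hQv : Q *ᵥ v = v ᵥ* Qᵀ := by
    rw [← Matrix.transpose_transpose Q, Matrix.mulVec_transpose, Matrix.transpose_transpose]
  rw [h1, h2, Matrix.dotProduct_mulVec, hQv, Matrix.vecMul_vecMul, hQ, Matrix.vecMul_one]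

/-- With `S` a `(1 ± ε)` ℓ₂-subspace embedding for the column space of `A` and
`S * A = Q * R` with `Qᵀ * Q = 1` and `R` invertible, the condition number of
`A * R⁻¹` is at most `√((1+ε)/(1−ε))`. -/
theorem preconditioned_condition_number {m n s : ℕ}
    (A : Matrix (Fin m) (Fin n) ℝ) (S : Matrix (Fin s) (Fin m) ℝ)
    (Q : Matrix (Fin s) (Fin n) ℝ) (R : Matrix (Fin n) (Fin n) ℝ)
    (ε : ℝ) (hε0 : 0 < ε) (hε1 : ε < 1)
    (hemb : ∀ x : Fin n → ℝ,
      (1 - ε) * e2norm (A.mulVec x) ^ 2 ≤ e2norm ((S * A).mulVec x) ^ 2 ∧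
      e2norm ((S * A).mulVec x) ^ 2 ≤ (1 + ε) * e2norm (A.mulVec x) ^ 2)
    (hQR : S * A = Q * R)
    (hQ : Qᵀ * Q = 1)
    (hR : IsUnit R) :
    ∀ x y : Fin n → ℝ, x ≠ 0 → y ≠ 0 →
      e2norm ((A * R⁻¹).mulVec x) / e2norm x ≤
        Real.sqrt ((1 + ε) / (1 - ε)) * (e2norm ((A * R⁻¹).mulVec y) / e2norm y) := by
  intro x y hx hy
  have h1ε : (0:ℝ) < 1 - ε := by linarith
  have h1ε' : (0:ℝ) < 1 + ε := by linarith
  -- key: for any z, (S*A).mulVec (R⁻¹.mulVec z) = Q.mulVec z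
  have hkey : ∀ z : Fin n → ℝ, (S * A).mulVec (R⁻¹.mulVec z) = Q.mulVec z := by
    intro z
    rw [Matrix.mulVec_mulVec, hQR, Matrix.mul_assoc,
      Matrix.mul_nonsing_inv R ((Matrix.isUnit_iff_isUnit_det R).mp hR), Matrix.mul_one]
  have hA : ∀ z : Fin n → ℝ, (A * R⁻¹).mulVec z = A.mulVec (R⁻¹.mulVec z) := by
    intro z; rw [Matrix.mulVec_mulVec]
  -- bounds
  have hbound : ∀ z : Fin n → ℝ,
      (1 - ε) * e2norm ((A * R⁻¹).mulVec z) ^ 2 ≤ e2norm z ^ 2 ∧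
      e2norm z ^ 2 ≤ (1 + ε) * e2norm ((A * R⁻¹).mulVec z) ^ 2 := by
    intro z
    have := hemb (R⁻¹.mulVec z)
    rw [hkey z, e2norm_mulVec_orth hQ, ← hA z] at this
    exact ⟨this.1, this.2⟩
  have hxpos := e2norm_pos hx
  have hypos := e2norm_pos hy
  set ax := e2norm ((A * R⁻¹).mulVec x) with hax
  set ay := e2norm ((A * R⁻¹).mulVec y) with hay
  have hax0 : 0 ≤ ax := e2norm_nonneg _
  have hay0 : 0 ≤ ay := e2norm_nonneg _
  have hb1 : (1 - ε) * ax ^ 2 ≤ e2norm x ^ 2 := (hbound x).1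
  have hb2 : e2norm y ^ 2 ≤ (1 + ε) * ay ^ 2 := (hbound y).2
  have sp : 0 < Real.sqrt (1 - ε) := Real.sqrt_pos.mpr h1ε
  have tp : 0 < Real.sqrt (1 + ε) := Real.sqrt_pos.mpr h1ε'
  have ss : Real.sqrt (1 - ε) ^ 2 = 1 - ε := Real.sq_sqrt h1ε.le
  have ts : Real.sqrt (1 + ε) ^ 2 = 1 + ε := Real.sq_sqrt h1ε'.le
  have h1 : ax / e2norm x ≤ 1 / Real.sqrt (1 - ε) := by
    rw [div_le_div_iff₀ hxpos sp]
    nlinarith [mul_pos hxpos sp]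
  have h2 : 1 / Real.sqrt (1 + ε) ≤ ay / e2norm y := by
    rw [div_le_div_iff₀ tp hypos]
    nlinarith [mul_nonneg hay0 tp.le, hypos]
  calc ax / e2norm x ≤ 1 / Real.sqrt (1 - ε) := h1
    _ = Real.sqrt ((1 + ε) / (1 - ε)) * (1 / Real.sqrt (1 + ε)) := by
        rw [Real.sqrt_div h1ε'.le]
        field_simp
    _ ≤ Real.sqrt ((1 + ε) / (1 - ε)) * (ay / e2norm y) :=
        mul_le_mul_of_nonneg_left h2 (Real.sqrt_nonneg _)
end

section
/- Let ε, τ ∈ (0,1) be real numbers, let κ be a real number with 1 ≤ κ ≤ (1+ε)/(1−ε), and let k be a natural number with k ≥ (ln 2 + |ln τ|) / |ln ε|. Then 2·((√κ − 1)/(√κ + 1))ᵏ ≤ τ. -/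
/-- If `ε, τ ∈ (0,1)`, `1 ≤ κ ≤ (1+ε)/(1−ε)`, and
`k ≥ (ln 2 + |ln τ|)/|ln ε|`, then `2·((√κ − 1)/(√κ + 1))ᵏ ≤ τ`. -/
theorem contraction_factor_bound (ε τ κ : ℝ) (k : ℕ)
    (hε0 : 0 < ε) (hε1 : ε < 1) (hτ0 : 0 < τ) (hτ1 : τ < 1)
    (hκ1 : 1 ≤ κ) (hκ2 : κ ≤ (1 + ε) / (1 - ε))
    (hk : (k : ℝ) ≥ (Real.log 2 + |Real.log τ|) / |Real.log ε|) :
    2 * ((Real.sqrt κ - 1) / (Real.sqrt κ + 1)) ^ k ≤ τ := by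
  have h1ε : (0:ℝ) < 1 - ε := by linarith
  have hs1 : 1 ≤ Real.sqrt κ := by
    rw [show (1:ℝ) = Real.sqrt 1 from (Real.sqrt_one).symm]
    exact Real.sqrt_le_sqrt hκ1
  set s := Real.sqrt κ with hs
  have hsκ : s ≤ κ := by
    have h : s * s = κ := Real.mul_self_sqrt (by linarith)
    nlinarith
  have hsle : s ≤ (1 + ε) / (1 - ε) := le_trans hsκ hκ2
  have hr0 : 0 ≤ (s - 1) / (s + 1) := div_nonneg (by linarith) (by linarith)
  have hrε : (s - 1) / (s + 1) ≤ ε := by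
    rw [div_le_iff₀ (by linarith)]
    have := (le_div_iff₀ h1ε).mp hsle
    nlinarith
  have hpow : ((s - 1) / (s + 1)) ^ k ≤ ε ^ k := pow_le_pow_left₀ hr0 hrε k
  have hεk : ε ^ k ≤ τ / 2 := by
    have hlε : Real.log ε < 0 := Real.log_neg hε0 hε1
    have hlτ : Real.log τ < 0 := Real.log_neg hτ0 hτ1
    have habsε : |Real.log ε| = -Real.log ε := abs_of_neg hlε
    have habsτ : |Real.log τ| = -Real.log τ := abs_of_neg hlτ
    have hk' : (k : ℝ) * (-Real.log ε) ≥ Real.log 2 - Real.log τ := by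
      rw [habsε, habsτ] at hk
      have := (div_le_iff₀ (by linarith : (0:ℝ) < -Real.log ε)).mp hk
      linarith
    have hklog : (k : ℝ) * Real.log ε ≤ Real.log (τ / 2) := by
      rw [Real.log_div (by linarith) (by norm_num)]
      nlinarith
    calc ε ^ k = Real.exp ((k : ℝ) * Real.log ε) := by
          rw [← Real.log_pow, Real.exp_log (by positivity)]
      _ ≤ Real.exp (Real.log (τ / 2)) := Real.exp_le_exp.mpr hklog
      _ = τ / 2 := Real.exp_log (by positivity)
  linarith [hpow.trans hεk]
end

section
/- Let A ∈ ℝ^{m×n}, b ∈ ℝᵐ, S ∈ ℝ^{s×m}, and ε ∈ (0,1), and suppose that for all x ∈ ℝⁿ: (1−ε)‖Ax − b‖₂² ≤ ‖S(Ax − b)‖₂² ≤ (1+ε)‖Ax − b‖₂². Let x̂ ∈ ℝⁿ be a minimizer of x ↦ ‖SAx − Sb‖₂ over ℝⁿ and let x⋆ ∈ ℝⁿ be a minimizer of x ↦ ‖Ax − b‖₂ over ℝⁿ. Then ‖A x̂ − b‖₂² ≤ ((1+ε)/(1−ε)) · ‖A x⋆ − b‖₂². -/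
open Matrix

/-- If `S` is a `(1 ± ε)` ℓ₂-subspace embedding for all residual vectors `Ax − b`,
`x̂` minimizes `‖SAx − Sb‖₂`, and `x⋆` minimizes `‖Ax − b‖₂`, then
`‖A x̂ − b‖₂² ≤ ((1+ε)/(1−ε))·‖A x⋆ − b‖₂²`. -/
theorem sketched_solution_residual_bound {m n s : ℕ}
    (A : Matrix (Fin m) (Fin n) ℝ) (b : Fin m → ℝ) (S : Matrix (Fin s) (Fin m) ℝ)
    (ε : ℝ) (hε0 : 0 < ε) (hε1 : ε < 1)
    (hemb : ∀ x : Fin n → ℝ,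
      (1 - ε) * e2norm (A.mulVec x - b) ^ 2 ≤ e2norm (S.mulVec (A.mulVec x - b)) ^ 2 ∧
      e2norm (S.mulVec (A.mulVec x - b)) ^ 2 ≤ (1 + ε) * e2norm (A.mulVec x - b) ^ 2)
    (xhat : Fin n → ℝ)
    (hxhat : ∀ x : Fin n → ℝ,
      e2norm ((S * A).mulVec xhat - S.mulVec b) ≤ e2norm ((S * A).mulVec x - S.mulVec b))
    (xstar : Fin n → ℝ)
    (hxstar : ∀ x : Fin n → ℝ,
      e2norm (A.mulVec xstar - b) ≤ e2norm (A.mulVec x - b)) :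
    e2norm (A.mulVec xhat - b) ^ 2 ≤ ((1 + ε) / (1 - ε)) * e2norm (A.mulVec xstar - b) ^ 2 := by
  have hkey : ∀ x : Fin n → ℝ, S.mulVec (A.mulVec x - b) = (S * A).mulVec x - S.mulVec b := by
    intro x; rw [Matrix.mulVec_sub, Matrix.mulVec_mulVec]
  have h1ε : 0 < 1 - ε := by linarith
  have h1 := (hemb xhat).1
  have h2 := (hemb xstar).2
  rw [hkey] at h1 h2
  have hmono : e2norm ((S * A).mulVec xhat - S.mulVec b) ^ 2 ≤
      e2norm ((S * A).mulVec xstar - S.mulVec b) ^ 2 :=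
    pow_le_pow_left₀ (e2norm_nonneg _) (hxhat xstar) 2
  rw [div_mul_eq_mul_div, le_div_iff₀ h1ε]
  nlinarith
end

section
/- Let A ∈ ℝ^{m×n}, b ∈ ℝᵐ, S ∈ ℝ^{s×m}, and ε ∈ (0,1), and suppose that for all x ∈ ℝⁿ: (1−ε)‖Ax − b‖₂² ≤ ‖S(Ax − b)‖₂² ≤ (1+ε)‖Ax − b‖₂². Let x̂ ∈ ℝⁿ be a minimizer of x ↦ ‖SAx − Sb‖₂ over ℝⁿ and let x⋆ ∈ ℝⁿ be a minimizer of x ↦ ‖Ax − b‖₂ over ℝⁿ. Then ‖A x̂ − A x⋆‖₂² ≤ (4/(1−ε)) · ‖A x⋆ − b‖₂². -/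
open Matrix

lemma e2norm_eq {k : ℕ} (v : Fin k → ℝ) :
    e2norm v = ‖(WithLp.equiv 2 (Fin k → ℝ)).symm v‖ := by
  rw [EuclideanSpace.norm_eq]
  simp [e2norm, sq_abs]

lemma e2norm_add_le {k : ℕ} (u v : Fin k → ℝ) : e2norm (u + v) ≤ e2norm u + e2norm v := by
  simp only [e2norm_eq]
  have : (WithLp.equiv 2 (Fin k → ℝ)).symm (u + v)
      = (WithLp.equiv 2 (Fin k → ℝ)).symm u + (WithLp.equiv 2 (Fin k → ℝ)).symm v := rfl
  rw [this]
  exact norm_add_le _ _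

/-- If `S` is a `(1 ± ε)` ℓ₂-subspace embedding for all residual vectors `Ax − b`,
`x̂` minimizes `‖SAx − Sb‖₂`, and `x⋆` minimizes `‖Ax − b‖₂`, then
`‖A x̂ − A x⋆‖₂² ≤ (4/(1−ε))·‖A x⋆ − b‖₂²`. -/
theorem sketched_initial_guess_bound {m n s : ℕ}
    (A : Matrix (Fin m) (Fin n) ℝ) (b : Fin m → ℝ) (S : Matrix (Fin s) (Fin m) ℝ)
    (ε : ℝ) (hε0 : 0 < ε) (hε1 : ε < 1)
    (hemb : ∀ x : Fin n → ℝ,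
      (1 - ε) * e2norm (A.mulVec x - b) ^ 2 ≤ e2norm (S.mulVec (A.mulVec x - b)) ^ 2 ∧
      e2norm (S.mulVec (A.mulVec x - b)) ^ 2 ≤ (1 + ε) * e2norm (A.mulVec x - b) ^ 2)
    (xhat : Fin n → ℝ)
    (hxhat : ∀ x : Fin n → ℝ,
      e2norm ((S * A).mulVec xhat - S.mulVec b) ≤ e2norm ((S * A).mulVec x - S.mulVec b))
    (xstar : Fin n → ℝ)
    (hxstar : ∀ x : Fin n → ℝ,
      e2norm (A.mulVec xstar - b) ≤ e2norm (A.mulVec x - b)) :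
    e2norm (A.mulVec xhat - A.mulVec xstar) ^ 2 ≤
      (4 / (1 - ε)) * e2norm (A.mulVec xstar - b) ^ 2 := by
  set a := e2norm (A.mulVec xhat - b) with ha
  set c := e2norm (A.mulVec xstar - b) with hc
  have hS : ∀ x : Fin n → ℝ, (S * A).mulVec x - S.mulVec b = S.mulVec (A.mulVec x - b) := by
    intro x
    rw [Matrix.mulVec_sub, ← Matrix.mulVec_mulVec]
  -- sketched optimality
  have h3 : e2norm (S.mulVec (A.mulVec xhat - b)) ≤ e2norm (S.mulVec (A.mulVec xstar - b)) := by
    have := hxhat xstar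
    rwa [hS, hS] at this
  have h2 := (hemb xhat).1
  have h4 := (hemb xstar).2
  have hsq : e2norm (S.mulVec (A.mulVec xhat - b)) ^ 2
      ≤ e2norm (S.mulVec (A.mulVec xstar - b)) ^ 2 :=
    pow_le_pow_left₀ (e2norm_nonneg _) h3 2
  have hkey : (1 - ε) * a ^ 2 ≤ (1 + ε) * c ^ 2 := le_trans h2 (le_trans hsq h4)
  -- triangle inequality
  have htri : e2norm (A.mulVec xhat - A.mulVec xstar) ≤ a + c := by
    have heq : A.mulVec xhat - A.mulVec xstar
        = (A.mulVec xhat - b) + -(A.mulVec xstar - b) := by ring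
    rw [heq]
    calc e2norm ((A.mulVec xhat - b) + -(A.mulVec xstar - b))
        ≤ e2norm (A.mulVec xhat - b) + e2norm (-(A.mulVec xstar - b)) := e2norm_add_le _ _
      _ = a + c := by
          congr 1
          unfold e2norm
          congr 1
          apply Finset.sum_congr rfl
          intro i _
          simp only [Pi.neg_apply, Pi.sub_apply]
          ring
  have hd : e2norm (A.mulVec xhat - A.mulVec xstar) ^ 2 ≤ (a + c) ^ 2 :=
    pow_le_pow_left₀ (e2norm_nonneg _) htri 2
  have h1ε : (0:ℝ) < 1 - ε := by linarith
  have hc0 : 0 ≤ c := e2norm_nonneg _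
  have ha0 : 0 ≤ a := e2norm_nonneg _
  have hfinal : (a + c) ^ 2 ≤ (4 / (1 - ε)) * c ^ 2 := by
    rw [div_mul_eq_mul_div, le_div_iff₀ h1ε]
    nlinarith [sq_nonneg (a - c), hkey]
  linarith
end

section
/- Let A ∈ ℝ^{m×n}, b ∈ ℝᵐ, S ∈ ℝ^{s×m}, ε ∈ (0,1), and τ ≥ 0, and suppose that for all x ∈ ℝⁿ: (1−ε)‖Ax − b‖₂² ≤ ‖S(Ax − b)‖₂² ≤ (1+ε)‖Ax − b‖₂². Let x̂ ∈ ℝⁿ be a minimizer of x ↦ ‖SAx − Sb‖₂ over ℝⁿ and let x⋆ ∈ ℝⁿ be a minimizer of x ↦ ‖Ax − b‖₂ over ℝⁿ. If x⁽ᵏ⁾ ∈ ℝⁿ satisfies ‖A x⁽ᵏ⁾ − A x⋆‖₂ ≤ τ · ‖A x̂ − A x⋆‖₂, then ‖A x⁽ᵏ⁾ − b‖₂² ≤ 2·(4τ²/(1−ε) + 1) · ‖A x⋆ − b‖₂². -/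
open Matrix

lemma e2norm_sub_le {k : ℕ} (u v : Fin k → ℝ) :
    e2norm (u - v) ≤ e2norm u + e2norm v := by
  simp only [e2norm_eq]
  have : (WithLp.equiv 2 (Fin k → ℝ)).symm (u - v)
      = (WithLp.equiv 2 (Fin k → ℝ)).symm u - (WithLp.equiv 2 (Fin k → ℝ)).symm v := rfl
  rw [this]; exact norm_sub_le _ _

/-- Final residual error estimate of the CSQRP-LSQR method: if `S` is a `(1 ± ε)`
ℓ₂-subspace embedding for all residuals `Ax − b`, `x̂` minimizes `‖SAx − Sb‖₂`,
`x⋆` minimizes `‖Ax − b‖₂`, and `‖A x⁽ᵏ⁾ − A x⋆‖₂ ≤ τ·‖A x̂ − A x⋆‖₂`, then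
`‖A x⁽ᵏ⁾ − b‖₂² ≤ 2·(4τ²/(1−ε) + 1)·‖A x⋆ − b‖₂²`. -/
theorem csqrp_lsqr_final_error {m n s : ℕ}
    (A : Matrix (Fin m) (Fin n) ℝ) (b : Fin m → ℝ) (S : Matrix (Fin s) (Fin m) ℝ)
    (ε τ : ℝ) (hε0 : 0 < ε) (hε1 : ε < 1) (hτ : 0 ≤ τ)
    (hemb : ∀ x : Fin n → ℝ,
      (1 - ε) * e2norm (A.mulVec x - b) ^ 2 ≤ e2norm (S.mulVec (A.mulVec x - b)) ^ 2 ∧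
      e2norm (S.mulVec (A.mulVec x - b)) ^ 2 ≤ (1 + ε) * e2norm (A.mulVec x - b) ^ 2)
    (xhat : Fin n → ℝ)
    (hxhat : ∀ x : Fin n → ℝ,
      e2norm ((S * A).mulVec xhat - S.mulVec b) ≤ e2norm ((S * A).mulVec x - S.mulVec b))
    (xstar : Fin n → ℝ)
    (hxstar : ∀ x : Fin n → ℝ,
      e2norm (A.mulVec xstar - b) ≤ e2norm (A.mulVec x - b))
    (xk : Fin n → ℝ)
    (hxk : e2norm (A.mulVec xk - A.mulVec xstar) ≤ τ * e2norm (A.mulVec xhat - A.mulVec xstar)) :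
    e2norm (A.mulVec xk - b) ^ 2 ≤
      2 * (4 * τ ^ 2 / (1 - ε) + 1) * e2norm (A.mulVec xstar - b) ^ 2 := by
  have hd : (0:ℝ) < 1 - ε := by linarith
  set r := e2norm (A.mulVec xstar - b) with hr
  have hr0 : 0 ≤ r := e2norm_nonneg _
  -- sketched minimizer comparison
  have hmv : ∀ x : Fin n → ℝ,
      (S * A).mulVec x - S.mulVec b = S.mulVec (A.mulVec x - b) := by
    intro x
    rw [Matrix.mulVec_sub, Matrix.mulVec_mulVec]
  have hsketch : e2norm (S.mulVec (A.mulVec xhat - b)) ≤ e2norm (S.mulVec (A.mulVec xstar - b)) := by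
    have := hxhat xstar
    rwa [hmv, hmv] at this
  have hS0 : 0 ≤ e2norm (S.mulVec (A.mulVec xhat - b)) := e2norm_nonneg _
  have hsketch2 : e2norm (S.mulVec (A.mulVec xhat - b)) ^ 2
      ≤ e2norm (S.mulVec (A.mulVec xstar - b)) ^ 2 :=
    pow_le_pow_left₀ hS0 hsketch 2
  have h1 := (hemb xhat).1
  have h2 := (hemb xstar).2
  -- ‖A xhat - b‖² ≤ (1+ε)/(1-ε) r², i.e. (1-ε)‖A xhat - b‖² ≤ (1+ε) r²
  have hhatb : (1 - ε) * e2norm (A.mulVec xhat - b) ^ 2 ≤ (1 + ε) * r ^ 2 := by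
    calc (1 - ε) * e2norm (A.mulVec xhat - b) ^ 2
        ≤ e2norm (S.mulVec (A.mulVec xhat - b)) ^ 2 := h1
      _ ≤ e2norm (S.mulVec (A.mulVec xstar - b)) ^ 2 := hsketch2
      _ ≤ (1 + ε) * r ^ 2 := h2
  -- triangle: ‖A xhat - A xstar‖ ≤ ‖A xhat - b‖ + r
  have htri1 : e2norm (A.mulVec xhat - A.mulVec xstar)
      ≤ e2norm (A.mulVec xhat - b) + r := by
    have : A.mulVec xhat - A.mulVec xstar = (A.mulVec xhat - b) - (A.mulVec xstar - b) := by
      abel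
    rw [this]
    exact e2norm_sub_le _ _
  have hb0 : 0 ≤ e2norm (A.mulVec xhat - b) := e2norm_nonneg _
  have hK0 : 0 ≤ e2norm (A.mulVec xhat - A.mulVec xstar) := e2norm_nonneg _
  -- (1-ε) * ‖A xhat - A xstar‖² ≤ 4 r²
  have hK : (1 - ε) * e2norm (A.mulVec xhat - A.mulVec xstar) ^ 2 ≤ 4 * r ^ 2 := by
    nlinarith [mul_le_mul_of_nonneg_left (pow_le_pow_left₀ hK0 htri1 2) hd.le,
      mul_nonneg hd.le (sq_nonneg (e2norm (A.mulVec xhat - b) - r))]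
  -- final triangle
  have htri2 : e2norm (A.mulVec xk - b) ≤ e2norm (A.mulVec xk - A.mulVec xstar) + r := by
    have : A.mulVec xk - b = (A.mulVec xk - A.mulVec xstar) - (b - A.mulVec xstar) := by abel
    rw [this]
    have h := e2norm_sub_le (A.mulVec xk - A.mulVec xstar) (b - A.mulVec xstar)
    have hneg : e2norm (b - A.mulVec xstar) = r := by
      simp only [hr, e2norm, Pi.sub_apply]
      congr 1
      exact Finset.sum_congr rfl fun i _ => by ring
    rwa [hneg] at h
  have hQ0 : 0 ≤ e2norm (A.mulVec xk - A.mulVec xstar) := e2norm_nonneg _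
  have hk0 : 0 ≤ e2norm (A.mulVec xk - b) := e2norm_nonneg _
  set t := 4 * τ ^ 2 / (1 - ε) with ht
  have htmul : t * (1 - ε) = 4 * τ ^ 2 := by
    rw [ht, div_mul_cancel₀]
    exact ne_of_gt hd
  -- τ² K ≤ t r²  where K = ‖A xhat - A xstar‖²
  have hQ : e2norm (A.mulVec xk - A.mulVec xstar) ^ 2
      ≤ τ ^ 2 * e2norm (A.mulVec xhat - A.mulVec xstar) ^ 2 := by
    nlinarith [hxk, mul_nonneg hτ hK0]
  have ht0 : 0 ≤ t := by positivity
  nlinarith [sq_nonneg (e2norm (A.mulVec xk - A.mulVec xstar) - r),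
    mul_le_mul_of_nonneg_left hK (sq_nonneg τ),
    mul_le_mul_of_nonneg_right htri2 (by linarith [hQ0, hr0] : (0:ℝ) ≤ e2norm (A.mulVec xk - A.mulVec xstar) + r)]
end

section
/- Let A ∈ ℝ^{m×n}, ε ∈ (0,1), and let S ∈ ℝ^{s×m} be a (1±ε) ℓ₂-subspace embedding for the column space of A. Suppose SA = U Σ Vᵀ where U ∈ ℝ^{s×r} satisfies UᵀU = I_r, V ∈ ℝ^{n×r} satisfies VᵀV = I_r, and Σ ∈ ℝ^{r×r} is a diagonal matrix with nonzero diagonal entries. Set P = V Σ⁻¹ ∈ ℝ^{n×r}. Then SAP = U, and for every x ∈ ℝʳ: (1/(1+ε))·‖x‖₂² ≤ ‖A P x‖₂² ≤ (1/(1−ε))·‖x‖₂²; consequently, for all nonzero x, y ∈ ℝʳ, ‖A P x‖₂/‖x‖₂ ≤ √((1+ε)/(1−ε)) · (‖A P y‖₂/‖y‖₂), i.e. κ(AP) ≤ √((1+ε)/(1−ε)). -/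
open Matrix

lemma e2norm_orth {s r : ℕ} {U : Matrix (Fin s) (Fin r) ℝ} (hU : Uᵀ * U = 1)
    (x : Fin r → ℝ) : e2norm (U.mulVec x) ^ 2 = e2norm x ^ 2 := by
  rw [e2norm_sq, e2norm_sq]
  have h1 : ∀ (w : Fin r → ℝ), ∑ i, (w i) ^ 2 = w ⬝ᵥ w := by
    intro w; simp [dotProduct, sq]
  have h2 : ∀ (w : Fin s → ℝ), ∑ i, (w i) ^ 2 = w ⬝ᵥ w := by
    intro w; simp [dotProduct, sq]
  rw [h1, h2, dotProduct_mulVec, ← mulVec_transpose, mulVec_mulVec, hU, one_mulVec]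

/-- SVD-based preconditioner of the CSSVDP-LSQR method: if `S` is a `(1 ± ε)`
ℓ₂-subspace embedding for the column space of `A` and `S * A = U * Σ * Vᵀ` is a
compact SVD, then with `P = V * Σ⁻¹` one has `S * A * P = U`,
`(1/(1+ε))‖x‖² ≤ ‖A P x‖² ≤ (1/(1−ε))‖x‖²` for all `x`, and `κ(AP) ≤ √((1+ε)/(1−ε))`. -/
theorem cssvdp_preconditioner {m n s r : ℕ}
    (A : Matrix (Fin m) (Fin n) ℝ) (S : Matrix (Fin s) (Fin m) ℝ)
    (U : Matrix (Fin s) (Fin r) ℝ) (V : Matrix (Fin n) (Fin r) ℝ)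
    (Sg : Matrix (Fin r) (Fin r) ℝ)
    (ε : ℝ) (hε0 : 0 < ε) (hε1 : ε < 1)
    (hemb : ∀ x : Fin n → ℝ,
      (1 - ε) * e2norm (A.mulVec x) ^ 2 ≤ e2norm ((S * A).mulVec x) ^ 2 ∧
      e2norm ((S * A).mulVec x) ^ 2 ≤ (1 + ε) * e2norm (A.mulVec x) ^ 2)
    (hSVD : S * A = U * Sg * Vᵀ)
    (hU : Uᵀ * U = 1)
    (hV : Vᵀ * V = 1)
    (hdiag : Sg.IsDiag)
    (hnz : ∀ i : Fin r, Sg i i ≠ 0) :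
    S * A * (V * Sg⁻¹) = U ∧
    (∀ x : Fin r → ℝ,
      (1 / (1 + ε)) * e2norm x ^ 2 ≤ e2norm ((A * (V * Sg⁻¹)).mulVec x) ^ 2 ∧
      e2norm ((A * (V * Sg⁻¹)).mulVec x) ^ 2 ≤ (1 / (1 - ε)) * e2norm x ^ 2) ∧
    (∀ x y : Fin r → ℝ, x ≠ 0 → y ≠ 0 →
      e2norm ((A * (V * Sg⁻¹)).mulVec x) / e2norm x ≤
        Real.sqrt ((1 + ε) / (1 - ε)) * (e2norm ((A * (V * Sg⁻¹)).mulVec y) / e2norm y)) := by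
  have hεm : (0:ℝ) < 1 - ε := by linarith
  have hεp : (0:ℝ) < 1 + ε := by linarith
  -- Sg is invertible
  have hdet : IsUnit Sg.det := by
    have hSgd : Matrix.diagonal (fun i => Sg i i) = Sg := hdiag.diagonal_diag
    rw [← hSgd, Matrix.det_diagonal]
    exact (Finset.prod_ne_zero_iff.mpr fun i _ => hnz i).isUnit
  have hinv : Sg * Sg⁻¹ = 1 := Matrix.mul_nonsing_inv _ hdet
  -- Part 1
  have part1 : S * A * (V * Sg⁻¹) = U := by
    rw [hSVD]
    calc U * Sg * Vᵀ * (V * Sg⁻¹) = U * Sg * (Vᵀ * V) * Sg⁻¹ := by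
          simp only [Matrix.mul_assoc]
      _ = U * (Sg * Sg⁻¹) := by rw [hV, Matrix.mul_one, Matrix.mul_assoc]
      _ = U := by rw [hinv, Matrix.mul_one]
  -- Part 2
  have part2 : ∀ x : Fin r → ℝ,
      (1 / (1 + ε)) * e2norm x ^ 2 ≤ e2norm ((A * (V * Sg⁻¹)).mulVec x) ^ 2 ∧
      e2norm ((A * (V * Sg⁻¹)).mulVec x) ^ 2 ≤ (1 / (1 - ε)) * e2norm x ^ 2 := by
    intro x
    have key : (S * A).mulVec ((V * Sg⁻¹).mulVec x) = U.mulVec x := by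
      rw [mulVec_mulVec, part1]
    have hAP : (A * (V * Sg⁻¹)).mulVec x = A.mulVec ((V * Sg⁻¹).mulVec x) := by
      rw [mulVec_mulVec]
    obtain ⟨h1, h2⟩ := hemb ((V * Sg⁻¹).mulVec x)
    rw [key, e2norm_orth hU] at h1 h2
    rw [hAP]
    constructor
    · rw [div_mul_eq_mul_div, one_mul, div_le_iff₀ hεp]; linarith
    · rw [div_mul_eq_mul_div, one_mul, le_div_iff₀ hεm]; linarith
  refine ⟨part1, part2, ?_⟩
  -- Part 3
  intro x y hx hy
  have hnx := e2norm_pos hx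
  have hny := e2norm_pos hy
  obtain ⟨hx1, hx2⟩ := part2 x
  obtain ⟨hy1, hy2⟩ := part2 y
  set a := e2norm ((A * (V * Sg⁻¹)).mulVec x) with ha
  set b := e2norm ((A * (V * Sg⁻¹)).mulVec y) with hb
  have ha0 : 0 ≤ a := e2norm_nonneg _
  have hb0 : 0 ≤ b := e2norm_nonneg _
  -- a / ‖x‖ ≤ √(1/(1-ε))
  have step1 : a / e2norm x ≤ Real.sqrt (1 / (1 - ε)) := by
    rw [div_le_iff₀ hnx]
    have : a = Real.sqrt (a ^ 2) := (Real.sqrt_sq ha0).symm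
    rw [this]
    calc Real.sqrt (a ^ 2) ≤ Real.sqrt (1 / (1 - ε) * e2norm x ^ 2) :=
          Real.sqrt_le_sqrt hx2
      _ = Real.sqrt (1 / (1 - ε)) * e2norm x := by
          rw [Real.sqrt_mul (by positivity), Real.sqrt_sq hnx.le]
  -- √(1/(1+ε)) ≤ b / ‖y‖
  have step2 : Real.sqrt (1 / (1 + ε)) ≤ b / e2norm y := by
    rw [le_div_iff₀ hny]
    have hbb : b = Real.sqrt (b ^ 2) := (Real.sqrt_sq hb0).symm
    calc Real.sqrt (1 / (1 + ε)) * e2norm y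
        = Real.sqrt (1 / (1 + ε) * e2norm y ^ 2) := by
          rw [Real.sqrt_mul (by positivity), Real.sqrt_sq hny.le]
      _ ≤ Real.sqrt (b ^ 2) := Real.sqrt_le_sqrt hy1
      _ = b := Real.sqrt_sq hb0
  calc a / e2norm x ≤ Real.sqrt (1 / (1 - ε)) := step1
    _ = Real.sqrt ((1 + ε) / (1 - ε)) * Real.sqrt (1 / (1 + ε)) := by
        rw [← Real.sqrt_mul (by positivity)]
        congr 1
        field_simp
    _ ≤ Real.sqrt ((1 + ε) / (1 - ε)) * (b / e2norm y) := by
        exact mul_le_mul_of_nonneg_left step2 (Real.sqrt_nonneg _)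
end
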